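/- Let 𝔯 be a topologically semiperfect complete, separated, right linear topological ring, 𝔥 = 𝔥(𝔯) its topological Jacobson radical, and 𝔰 = 𝔯/𝔥 the quotient ring endowed with the quotient topology. Let (g_z)_{z∈Z} be a zero-convergent family of primitive idempotents in 𝔰. Then there exists a zero-convergent family (e_z)_{z∈Z} of local idempotents in 𝔯 such that the image of e_z in 𝔰 equals g_z for every z ∈ Z. -/

import Mathlib

open Filter MulOpposite

universe u

/-- The corner ring `eRe` of an idempotent `e` is a local ring: `e` is idempotent, nonzero,
and every element `exe` of the corner ring is invertible in `eRe` (with unit `e`),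
or `e - exe` is. -/
def IsLocalIdempotent {R : Type*} [Ring R] (e : R) : Prop :=
  IsIdempotentElem e ∧ e ≠ 0 ∧
    ∀ x : R,
      (∃ y : R, e * x * e * (e * y * e) = e ∧ e * y * e * (e * x * e) = e) ∨
      (∃ y : R, (e - e * x * e) * (e * y * e) = e ∧ e * y * e * (e - e * x * e) = e)

/-- Open right ideals form a base of neighborhoods of zero. -/
def IsRightLinearTopology (R : Type u) [Ring R] [TopologicalSpace R] : Prop :=
  ∀ s ∈ nhds (0 : R), ∃ I : Submodule Rᵐᵒᵖ R, IsOpen (I : Set R) ∧ (I : Set R) ⊆ s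

/-- A topological ring is topologically semiperfect if there is a zero-convergent family of
pairwise orthogonal local idempotents summing to `1`. -/
def IsTopSemiperfect (R : Type u) [Ring R] [TopologicalSpace R] : Prop :=
  ∃ (Z : Type u) (e : Z → R),
    Filter.Tendsto e Filter.cofinite (nhds 0) ∧
    (∀ z, IsLocalIdempotent (e z)) ∧
    (∀ z w, z ≠ w → e z * e w = 0) ∧
    HasSum e 1

/-- The topological Jacobson radical: the intersection of all open maximal right ideals. -/
def topJacobson (R : Type u) [Ring R] [TopologicalSpace R] : Set R :=
  ⋂ I ∈ {I : Submodule Rᵐᵒᵖ R | IsOpen (I : Set R) ∧ IsCoatom I}, (I : Set R)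

/-- The abstract Jacobson radical: the intersection of all maximal right ideals. -/
def absJacobson (R : Type u) [Ring R] : Set R :=
  ⋂ I ∈ {I : Submodule Rᵐᵒᵖ R | IsCoatom I}, (I : Set R)

/-- A right module is discrete if the annihilator of each element is open. -/
def IsDiscreteModule (R : Type u) [Ring R] [TopologicalSpace R]
    (N : Type u) [AddCommGroup N] [Module Rᵐᵒᵖ N] : Prop :=
  ∀ n : N, IsOpen {r : R | op r • n = 0}

/-- `N` has a projective cover in the category of all `R₀`-modules. -/
def HasProjCover (R₀ : Type u) [Ring R₀] (N : Type u) [AddCommGroup N] [Module R₀ N] : Prop :=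
  ∃ (P : Type u) (_ : AddCommGroup P) (_ : Module R₀ P) (p : P →ₗ[R₀] N),
    Module.Projective R₀ P ∧ Function.Surjective p ∧
      ∀ K : Submodule R₀ P, K ⊔ LinearMap.ker p = ⊤ → K = ⊤

/-- The finite topology on `End_A(M)^op`: the topology of pointwise convergence,
`M` being discrete; a base of neighborhoods of zero is given by the annihilators of
finite subsets of `M`. -/
def finiteTopologyEnd (A M : Type u) [Ring A] [AddCommGroup M] [Module A M] :
    TopologicalSpace (Module.End A M)ᵐᵒᵖ :=
  TopologicalSpace.induced (fun f (m : M) => f.unop m)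
    (@Pi.topologicalSpace M (fun _ => M) (fun _ => ⊥))

/-- The topological Jacobson radical, as an additive subgroup. -/
def topJacobsonAddSubgroup (R : Type u) [Ring R] [TopologicalSpace R] : AddSubgroup R :=
  ⨅ I ∈ {I : Submodule Rᵐᵒᵖ R | IsOpen (I : Set R) ∧ IsCoatom I}, I.toAddSubgroup

/-!
Write `1 = ∑ u_w` with `(u_w)` a zero-convergent family of orthogonal local idempotents. For a lift
`a` of a primitive idempotent of `R/𝔥`, some `u_w a` lies outside `𝔥`; as `u_w R u_w` is local,
`u_w a c = u_w` for some `c`, and primitivity forces `a ≡ x y` modulo `𝔥`, where `x = a c u_w`,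
`y = u_w a` and `y x ≡ u_w`. After correcting `x` modulo `𝔥` so that `u_v x = 0` whenever
`u_v a ∈ 𝔥`, the element `y x` is invertible in `u_w R u_w`, say `y x s = u_w`, and
`e = x s u_w y` is a local idempotent isomorphic to `u_w` with `e ≡ a`.
The lifts converge to zero: `u_v e_z = 0` unless `u_v f_z ∉ 𝔥`, which happens for finitely many `z`
only, since the residues of the `f_z` tend to zero and `u_v ∉ 𝔥`.
-/

open Topology

section RightIdeal

variable {R : Type*} [Ring R]

-- Makes `Submodule Rᵐᵒᵖ R` coatomic: every proper right ideal lies in a maximal one.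
instance : Module.Finite Rᵐᵒᵖ R :=
  ⟨⟨{(1 : R)}, by
    rw [Finset.coe_singleton, Submodule.span_singleton_eq_top_iff]
    exact fun v => ⟨op v, one_mul v⟩⟩⟩

theorem mul_mem_rightIdeal {I : Submodule Rᵐᵒᵖ R} {a : R} (ha : a ∈ I) (b : R) : a * b ∈ I :=
  I.smul_mem (op b) ha

theorem eq_top_of_one_mem_rightIdeal {I : Submodule Rᵐᵒᵖ R} (h : (1 : R) ∈ I) : I = ⊤ :=
  eq_top_iff.2 fun x _ => one_mul x ▸ mul_mem_rightIdeal h x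

theorem exists_add_mul_eq_one_of_isCoatom {M : Submodule Rᵐᵒᵖ R} (hM : IsCoatom M) {a : R}
    (ha : a ∉ M) : ∃ m ∈ M, ∃ t, m + a * t = 1 := by
  have hsup : M ⊔ Submodule.span Rᵐᵒᵖ {a} = ⊤ :=
    hM.2 _ (left_lt_sup.2 (by rwa [Submodule.span_singleton_le_iff_mem]))
  obtain ⟨m, hm, b, hb, hmb⟩ := Submodule.mem_sup.1 (hsup ▸ Submodule.mem_top : (1 : R) ∈ _)
  obtain ⟨t, rfl⟩ := Submodule.mem_span_singleton.1 hb
  exact ⟨m, hm, t.unop, hmb⟩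

end RightIdeal

namespace IsLocalIdempotent

variable {R : Type*} [Ring R] {e : R}

theorem mem_of_corner_of_not_exists_mul_eq (he : IsLocalIdempotent e) {d : R}
    (hd : e * d * e = d) (h : ¬∃ s, d * s = e) {M : Submodule Rᵐᵒᵖ R} (hM : IsCoatom M) :
    d ∈ M := by
  by_contra hdM
  obtain ⟨m, hm, t, hmt⟩ := exists_add_mul_eq_one_of_isCoatom hM hdM
  have hed : ∀ x, e * (d * x) = d * x := fun x => by
    rw [← mul_assoc, ← hd, ← mul_assoc, ← mul_assoc, he.1.eq]
  have hde : ∀ x, d * (e * x) = d * x := fun x => by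
    rw [← mul_assoc, ← hd, mul_assoc _ e e, he.1.eq]
  set c := e * t * e
  have hdc : e * (d * c) * e = d * c := by simp only [c, mul_assoc, hed, he.1.eq]
  have hmem : e - d * c ∈ M := by
    have : e - d * c = m * e := by
      rw [eq_sub_of_add_eq hmt, sub_mul, one_mul]
      simp only [c, mul_assoc, hde]
    exact this ▸ mul_mem_rightIdeal hm e
  rcases he.2.2 (d * c) with ⟨y, h1, -⟩ | ⟨y, h1, -⟩
  · rw [hdc, mul_assoc] at h1
    exact h ⟨_, h1⟩
  · rw [hdc] at h1
    have heM : e ∈ M := h1 ▸ mul_mem_rightIdeal hmem _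
    exact hdM (by simpa [hd] using mul_mem_rightIdeal (mul_mem_rightIdeal heM d) e)

theorem mul_of_mul_eq {u α y : R} (hu : IsLocalIdempotent u) (hyα : y * α = u) (hα : α * u = α)
    (hy : u * y = y) :
    IsLocalIdempotent (α * y) := by
  have hmul : ∀ p q, α * p * y * (α * q * y) = α * (p * u * q) * y := fun p q => by
    rw [← hyα]; noncomm_ring
  have hcorner : ∀ z, α * y * (α * z * y) * (α * y) = α * (u * z * u) * y := fun z => by
    rw [← hyα]; noncomm_ring
  have transfer : ∀ n, n * u = n → u * n = n → (∃ z, n * (u * z * u) = u ∧ u * z * u * n = u) →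
      ∃ w, α * n * y * (α * y * w * (α * y)) = α * y ∧
        α * y * w * (α * y) * (α * n * y) = α * y := by
    rintro n hn hn' ⟨z, h1, h2⟩
    refine ⟨α * z * y, ?_, ?_⟩
    · rw [hcorner, hmul, hn, h1, hα]
    · rw [hcorner, hmul, mul_assoc (u * z * u) u n, hn', h2, hα]
  refine ⟨by rw [IsIdempotentElem, mul_assoc, ← mul_assoc y, hyα, hy], fun h => hu.2.1 ?_,
    fun r => ?_⟩
  · calc u = y * (α * y) * α := by rw [← mul_assoc, hyα, mul_assoc, hyα, hu.1.eq]
      _ = 0 := by rw [h, mul_zero, zero_mul]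
  set m := y * r * α
  have hm : m * u = m := by simp only [m, mul_assoc, hα]
  have hum : u * m = m := by simp only [m, ← mul_assoc, hy]
  have hre : α * y * r * (α * y) = α * m * y := by simp only [m, mul_assoc]
  rcases hu.2.2 m with h | h <;> rw [hum, hm] at h
  · exact Or.inl (hre ▸ transfer m hm hum h)
  · have hsub : α * y - α * y * r * (α * y) = α * (u - m) * y := by
      rw [hre, mul_sub, sub_mul, hα]
    exact Or.inr (hsub ▸ transfer (u - m) (by rw [sub_mul, hu.1.eq, hm])
      (by rw [mul_sub, hu.1.eq, hum]) h)

end IsLocalIdempotent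

def IsPrimitiveIdempotent {S : Type*} [Ring S] (a : S) : Prop :=
  IsIdempotentElem a ∧ a ≠ 0 ∧ ∀ p q : S, IsIdempotentElem p → IsIdempotentElem q →
    p * q = 0 → q * p = 0 → p + q = a → p = 0 ∨ q = 0

namespace IsPrimitiveIdempotent

variable {S : Type*} [Ring S] {a : S}

theorem eq_of_isIdempotentElem (ha : IsPrimitiveIdempotent a) {ε : S} (hε : IsIdempotentElem ε)
    (hε0 : ε ≠ 0) (hl : a * ε = ε) (hr : ε * a = ε) : ε = a := by
  have hcompl : IsIdempotentElem (a - ε) := by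
    simp only [IsIdempotentElem, mul_sub, sub_mul, ha.1.eq, hε.eq, hl, hr, sub_self, sub_zero]
  rcases ha.2.2 ε (a - ε) hε hcompl (by rw [mul_sub, hr, hε.eq, sub_self])
    (by rw [sub_mul, hl, hε.eq, sub_self]) (add_sub_cancel ε a) with h | h
  · exact absurd h hε0
  · exact (sub_eq_zero.1 h).symm

theorem mul_eq (ha : IsPrimitiveIdempotent a) {x y : S} (hx : a * x = x) (hy : y * a = y)
    (hyxy : y * x * y = y) (hy0 : y ≠ 0) : x * y = a :=
  ha.eq_of_isIdempotentElem (by rw [IsIdempotentElem, mul_assoc, ← mul_assoc y, hyxy])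
    (fun h => hy0 (by rw [← hyxy, mul_assoc, h, mul_zero]))
    (by rw [← mul_assoc, hx]) (by rw [mul_assoc, hy])

end IsPrimitiveIdempotent

section TopJacobson

variable {R : Type u} [Ring R] [TopologicalSpace R]

theorem mem_topJacobson_iff {x : R} :
    x ∈ topJacobson R ↔ ∀ M : Submodule Rᵐᵒᵖ R, IsOpen (M : Set R) → IsCoatom M → x ∈ M := by
  simp [topJacobson]

theorem mem_topJacobsonAddSubgroup_iff {x : R} :
    x ∈ topJacobsonAddSubgroup R ↔ x ∈ topJacobson R := by
  simp [topJacobsonAddSubgroup, topJacobson]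

theorem isClosed_topJacobson [IsTopologicalAddGroup R] : IsClosed (topJacobson R) :=
  isClosed_biInter fun M hM => AddSubgroup.isClosed_of_isOpen M.toAddSubgroup hM.1

theorem IsLocalIdempotent.exists_mul_eq_of_notMem_topJacobson {e b : R} (he : IsLocalIdempotent e)
    (hb : e * b = b) (hbJ : b ∉ topJacobson R) : ∃ s, b * s = e := by
  by_contra h
  refine hbJ (mem_topJacobson_iff.2 fun M _ hM => ?_)
  have hcorner : ∀ c, b * c * e ∈ M := fun c =>
    he.mem_of_corner_of_not_exists_mul_eq
      (by rw [← mul_assoc, ← mul_assoc, hb, mul_assoc _ e e, he.1.eq])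
      (fun ⟨s, hs⟩ => h ⟨c * e * s, by rw [← mul_assoc, ← mul_assoc, hs]⟩) hM
  by_contra hbM
  obtain ⟨m, hm, t, hmt⟩ := exists_add_mul_eq_one_of_isCoatom hM hbM
  have heM : e ∈ M := by
    have := M.add_mem (mul_mem_rightIdeal hm e) (hcorner t)
    rwa [← add_mul, hmt, one_mul] at this
  exact hbM (hb ▸ mul_mem_rightIdeal heM b)

/-- For an open maximal right ideal `M`, the right ideal `{b | r * b ∈ M}` is `⊤` or again open
and maximal. -/
theorem mul_mem_topJacobson_left [IsTopologicalRing R] (r : R) {a : R} (ha : a ∈ topJacobson R) :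
    r * a ∈ topJacobson R := by
  rw [mem_topJacobson_iff] at ha ⊢
  intro M hMo hM
  let N := M.comap (DistribSMul.toLinearMap Rᵐᵒᵖ R r)
  rcases eq_or_ne N ⊤ with hN | hN
  · exact (hN ▸ Submodule.mem_top : a ∈ N)
  refine ha N (hMo.preimage (continuous_const_mul r)) ⟨hN, fun K hK => ?_⟩
  obtain ⟨k, hkK, hkN⟩ := SetLike.exists_of_lt hK
  obtain ⟨m, hm, t, hmt⟩ := exists_add_mul_eq_one_of_isCoatom hM hkN
  change m + r * k * t = 1 at hmt
  have h1 : 1 - k * t * r ∈ N := by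
    show r * (1 - k * t * r) ∈ M
    rw [mul_sub, mul_one, ← mul_assoc, ← mul_assoc, eq_sub_of_add_eq' hmt, sub_mul, one_mul,
      sub_sub_cancel]
    exact mul_mem_rightIdeal hm r
  refine eq_top_of_one_mem_rightIdeal ?_
  have := K.add_mem (hK.le h1) (mul_mem_rightIdeal hkK (t * r))
  rwa [← mul_assoc, sub_add_cancel] at this

variable (R) in
def topJacobsonIdeal [IsTopologicalRing R] : Ideal R where
  carrier := topJacobson R
  add_mem' ha hb := mem_topJacobson_iff.2 fun M hMo hM =>
    M.add_mem (mem_topJacobson_iff.1 ha M hMo hM) (mem_topJacobson_iff.1 hb M hMo hM)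
  zero_mem' := mem_topJacobson_iff.2 fun M _ _ => M.zero_mem
  smul_mem' := mul_mem_topJacobson_left

instance [IsTopologicalRing R] : (topJacobsonIdeal R).IsTwoSided :=
  ⟨fun b ha => mem_topJacobson_iff.2 fun M hMo hM =>
    mul_mem_rightIdeal (mem_topJacobson_iff.1 ha M hMo hM) b⟩

end TopJacobson

notation "π" => Ideal.Quotient.mk (topJacobsonIdeal _)

section Quotient

variable {R : Type u} [Ring R] [TopologicalSpace R] [IsTopologicalRing R]

theorem mk_topJacobsonIdeal_eq_iff {a b : R} :
    π a = π b ↔ a - b ∈ topJacobson R :=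
  Ideal.Quotient.eq

theorem mk_topJacobsonIdeal_eq_zero_iff {a : R} :
    π a = 0 ↔ a ∈ topJacobson R :=
  Ideal.Quotient.eq_zero_iff_mem

theorem isPrimitiveIdempotent_mk {a : R} (hidem : a * a - a ∈ topJacobson R)
    (hne : a ∉ topJacobson R)
    (hprim : ∀ p q : R, p * p - p ∈ topJacobson R → q * q - q ∈ topJacobson R →
      p * q ∈ topJacobson R → q * p ∈ topJacobson R → a - (p + q) ∈ topJacobson R →
      p ∈ topJacobson R ∨ q ∈ topJacobson R) :
    IsPrimitiveIdempotent (π a) := by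
  refine ⟨by rw [IsIdempotentElem, ← map_mul, mk_topJacobsonIdeal_eq_iff]; exact hidem,
    mt mk_topJacobsonIdeal_eq_zero_iff.1 hne, ?_⟩
  intro p q
  obtain ⟨p, rfl⟩ := Ideal.Quotient.mk_surjective p
  obtain ⟨q, rfl⟩ := Ideal.Quotient.mk_surjective q
  simp only [IsIdempotentElem, ← map_mul, ← map_add, mk_topJacobsonIdeal_eq_iff,
    mk_topJacobsonIdeal_eq_zero_iff]
  intro hp hq hpq hqp hpqa
  have hapq := (topJacobsonIdeal R).neg_mem hpqa
  rw [neg_sub] at hapq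
  exact hprim p q hp hq hpq hqp hapq

theorem IsLocalIdempotent.exists_isLocalIdempotent_mul_mk_eq {u x y : R}
    (hu : IsLocalIdempotent u) (huJ : u ∉ topJacobson R) (hy : u * y = y) (hxu : π (x * u) = π x)
    (hyx : π (y * x) = π u) :
    ∃ s, IsLocalIdempotent (x * s * u * y) ∧ π (x * s * u * y) = π (x * y) := by
  have hyxJ : y * x ∉ topJacobson R := fun h =>
    huJ (mk_topJacobsonIdeal_eq_zero_iff.1 (hyx ▸ mk_topJacobsonIdeal_eq_zero_iff.2 h))
  obtain ⟨s, hs⟩ := hu.exists_mul_eq_of_notMem_topJacobson (by rw [← mul_assoc, hy]) hyxJ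
  refine ⟨s, hu.mul_of_mul_eq (by simp only [← mul_assoc, hs, hu.1.eq])
    (by rw [mul_assoc, hu.1.eq]) hy, ?_⟩
  have hUs : π u * π s = π u := by conv_lhs => rw [← hyx, ← map_mul, hs]
  simp only [map_mul] at hxu ⊢
  calc π x * π s * π u * π y = π x * (π u * π s) * π u * π y := by rw [← mul_assoc, hxu]
    _ = π x * π y := by rw [hUs, hxu, hxu]

end Quotient

section Topological

variable {R : Type u} [Ring R] [TopologicalSpace R] [IsTopologicalRing R]

theorem notMem_topJacobson_of_isIdempotentElem [T1Space R] (hRL : IsRightLinearTopology R)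
    {e : R} (he : IsIdempotentElem e) (he0 : e ≠ 0) : e ∉ topJacobson R := by
  obtain ⟨I₀, hI₀o, hI₀⟩ := hRL {e}ᶜ (isOpen_compl_singleton.mem_nhds he0.symm)
  obtain ⟨I, hIo, hI⟩ := hRL _
    ((continuous_const_mul e).tendsto' 0 0 (mul_zero e) (hI₀o.mem_nhds I₀.zero_mem))
  have hB : (1 : R) ∉ Submodule.span Rᵐᵒᵖ {1 - e} ⊔ I := by
    intro h
    obtain ⟨b, hb, i, hi, hbi⟩ := Submodule.mem_sup.1 h
    obtain ⟨t, rfl⟩ := Submodule.mem_span_singleton.1 hb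
    change (1 - e) * t.unop + i = 1 at hbi
    have hei : e * i = e := by
      rw [eq_sub_of_add_eq' hbi, mul_sub, mul_one, ← mul_assoc, mul_sub, mul_one, he.eq,
        sub_self, zero_mul, sub_zero]
    exact hI₀ (hI hi) hei
  obtain ⟨M, hM, hBM⟩ :=
    (eq_top_or_exists_le_coatom (Submodule.span Rᵐᵒᵖ {1 - e} ⊔ I)).resolve_left
      fun h => hB (h ▸ Submodule.mem_top)
  have hMo : IsOpen (M : Set R) := AddSubgroup.isOpen_mono (H₁ := I.toAddSubgroup)
    (H₂ := M.toAddSubgroup) (fun x hx => hBM (Submodule.mem_sup_right hx)) hIo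
  intro heJ
  refine hM.1 (eq_top_of_one_mem_rightIdeal ?_)
  simpa using M.add_mem (hBM (Submodule.mem_sup_left (Submodule.mem_span_singleton_self _)))
    (mem_topJacobson_iff.1 heJ M hMo hM)

theorem exists_mul_notMem_topJacobson [T2Space R] {W : Type*} {u : W → R} (huSum : HasSum u 1)
    {a : R} (ha : a ∉ topJacobson R) : ∃ w, u w * a ∉ topJacobson R := by
  by_contra! h
  have hsum : HasSum (fun w => u w * a) a := by simpa using huSum.mul_right a
  exact ha (hsum.tsum_eq ▸ tsum_mem (s := topJacobsonIdeal R) isClosed_topJacobson h)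

theorem IsLocalIdempotent.finite_setOf_mul_notMem_topJacobson [T1Space R]
    (hRL : IsRightLinearTopology R) {u : R} (hu : IsLocalIdempotent u) {Z : Type*} {f : Z → R}
    (hf : Tendsto (fun z => (QuotientAddGroup.mk (f z) : R ⧸ topJacobsonAddSubgroup R))
      cofinite (𝓝 0)) :
    {z | u * f z ∉ topJacobson R}.Finite := by
  -- If `f z ∈ I₂ + 𝔥` and `u f z c = u`, then `u ∈ u I₂ c + 𝔥 ⊆ I + 𝔥`, which `I` is chosen to
  -- exclude.
  have huJ := notMem_topJacobson_of_isIdempotentElem hRL hu.1 hu.2.1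
  obtain ⟨I, hIo, hI⟩ := hRL _ ((continuous_const.sub continuous_id).tendsto' 0 u (sub_zero u)
    (isClosed_topJacobson.isOpen_compl.mem_nhds huJ))
  obtain ⟨I₂, hI₂o, hI₂⟩ := hRL _
    ((continuous_const_mul u).tendsto' 0 0 (mul_zero u) (hIo.mem_nhds I.zero_mem))
  have hev : ∀ᶠ z in cofinite, ∃ i ∈ I₂, f z - i ∈ topJacobson R := by
    filter_upwards [hf ((QuotientAddGroup.isOpenMap_coe _ hI₂o).mem_nhds ⟨0, I₂.zero_mem, rfl⟩)]
      with z ⟨i, hi, hiz⟩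
    exact ⟨i, hi, mem_topJacobsonAddSubgroup_iff.1 (QuotientAddGroup.eq_iff_sub_mem.1 hiz.symm)⟩
  refine (eventually_cofinite.1 hev).subset fun z hz ⟨i, hi, hfi⟩ => ?_
  obtain ⟨c, hc⟩ := hu.exists_mul_eq_of_notMem_topJacobson (by rw [← mul_assoc, hu.1.eq]) hz
  have hcontra : u - u * i * c ∉ topJacobson R := hI (mul_mem_rightIdeal (hI₂ hi) c)
  have : u * (f z - i) * c = u - u * i * c := by rw [mul_sub, sub_mul, hc]
  exact hcontra (this ▸ Ideal.mul_mem_right c (topJacobsonIdeal R) (Ideal.mul_mem_left _ u hfi))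

theorem tendsto_cofinite_zero_of_finite_mul_ne_zero [T2Space R] (hRL : IsRightLinearTopology R)
    {W : Type*} {u : W → R} (hu0 : Tendsto u cofinite (𝓝 0)) (huSum : HasSum u 1) {Z : Type*}
    {e : Z → R} (he : ∀ v, {z | u v * e z ≠ 0}.Finite) : Tendsto e cofinite (𝓝 0) := by
  intro s hs
  obtain ⟨I, hIo, hIs⟩ := hRL s hs
  have hF : {v | u v ∉ I}.Finite := hu0 (hIo.mem_nhds I.zero_mem)
  refine mem_cofinite.2 ((hF.biUnion fun v _ => he v).subset fun z hz => ?_)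
  by_contra! hz'
  simp only [Set.mem_ofPred_eq, ne_eq, Set.mem_iUnion, exists_prop, not_exists, not_and,
    not_not] at hz'
  refine hz (hIs ?_)
  have hsum : HasSum (fun v => u v * e z) (e z) := by simpa using huSum.mul_right (e z)
  refine hsum.tsum_eq ▸ tsum_mem (AddSubgroup.isClosed_of_isOpen I.toAddSubgroup hIo) fun v => ?_
  by_cases hv : u v ∈ I
  · exact mul_mem_rightIdeal hv _
  · rw [hz' v hv]; exact I.zero_mem

end Topological

section Complete

variable {R : Type u} [Ring R] [UniformSpace R] [IsUniformAddGroup R] [IsTopologicalRing R]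
  [CompleteSpace R] [T2Space R]

theorem exists_mk_eq_and_mul_eq_zero {W : Type*} {u : W → R}
    (huorth : ∀ v w, v ≠ w → u v * u w = 0) (huSum : HasSum u 1) (s : Set W) (x₀ : R)
    (hs : ∀ v ∈ s, u v * x₀ ∈ topJacobson R) : ∃ x, π x = π x₀ ∧ ∀ v ∈ s, u v * x = 0 := by
  have hsum : Summable fun v => u v * x₀ := (huSum.mul_right x₀).summable
  refine ⟨∑' v : ↥sᶜ, u v * x₀, mk_topJacobsonIdeal_eq_iff.2 ?_, fun v hv => ?_⟩
  · have hsplit := (hsum.subtype s).tsum_add_tsum_compl (hsum.subtype sᶜ)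
    rw [(huSum.mul_right x₀).tsum_eq, one_mul] at hsplit
    rw [← neg_sub, ← eq_sub_of_add_eq hsplit]
    exact neg_mem (tsum_mem (s := topJacobsonIdeal R) (f := fun w : ↥s => u w * x₀)
      isClosed_topJacobson fun w => hs w.1 w.2)
  · have hsc : Summable fun w : ↥sᶜ => u w * x₀ := hsum.subtype sᶜ
    rw [← hsc.tsum_mul_left]
    refine (tsum_congr fun w => ?_).trans tsum_zero
    rw [← mul_assoc, huorth v w (ne_of_mem_of_not_mem hv w.2), zero_mul]

theorem exists_isLocalIdempotent_mk_eq (hRL : IsRightLinearTopology R) {W : Type*} {u : W → R}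
    (huloc : ∀ w, IsLocalIdempotent (u w)) (huorth : ∀ v w, v ≠ w → u v * u w = 0)
    (huSum : HasSum u 1) {a : R} (ha : IsPrimitiveIdempotent (π a)) :
    ∃ e, IsLocalIdempotent e ∧ π e = π a ∧ ∀ v, u v * a ∈ topJacobson R → u v * e = 0 := by
  obtain ⟨w, hw⟩ :=
    exists_mul_notMem_topJacobson huSum (mt mk_topJacobsonIdeal_eq_zero_iff.2 ha.2.1)
  have hu := huloc w
  obtain ⟨c, hc⟩ := hu.exists_mul_eq_of_notMem_topJacobson (by rw [← mul_assoc, hu.1.eq]) hw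
  obtain ⟨x, hx, hxrows⟩ := exists_mk_eq_and_mul_eq_zero huorth huSum
    {v | u v * a ∈ topJacobson R} (a * c * u w) fun v hv => by
      rw [← mul_assoc, ← mul_assoc]
      exact Ideal.mul_mem_right _ _ (Ideal.mul_mem_right _ (topJacobsonIdeal R) hv)
  have hU : π (u w) * π (u w) = π (u w) := (hu.1.map π).eq
  have hC : π (u w) * π a * π c = π (u w) := by simp only [← map_mul, hc]
  have hYX : π (u w) * π a * π x = π (u w) := by
    rw [hx, map_mul, map_mul]
    calc π (u w) * π a * (π a * π c * π (u w)) = π (u w) * (π a * π a) * π c * π (u w) := by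
          simp only [mul_assoc]
      _ = π (u w) := by rw [ha.1.eq, hC, hU]
  have hXY : π x * (π (u w) * π a) = π a := ha.mul_eq
    (by rw [hx, map_mul, map_mul, ← mul_assoc, ← mul_assoc, ha.1.eq])
    (by rw [mul_assoc, ha.1.eq]) (by rw [hYX, ← mul_assoc, hU])
    (by rw [← map_mul]; exact mt mk_topJacobsonIdeal_eq_zero_iff.1 hw)
  obtain ⟨s, hloc, hmk⟩ := hu.exists_isLocalIdempotent_mul_mk_eq (x := x) (y := u w * a)
    (notMem_topJacobson_of_isIdempotentElem hRL hu.1 hu.2.1) (by rw [← mul_assoc, hu.1.eq])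
    (by rw [map_mul, hx, map_mul, mul_assoc, hU]) (by rw [map_mul, map_mul, hYX])
  refine ⟨_, hloc, hmk.trans (by rw [map_mul, map_mul, hXY]), fun v hv => ?_⟩
  simp only [← mul_assoc, hxrows v hv, zero_mul]

end Complete

theorem lift_zero_convergent_primitive_idempotents
    (R : Type u) [Ring R] [UniformSpace R] [IsUniformAddGroup R] [IsTopologicalRing R]
    [T2Space R] [CompleteSpace R] (hRL : IsRightLinearTopology R)
    (hSP : IsTopSemiperfect R)
    (Z : Type u) (f : Z → R)
    -- the residues of the `f z` modulo the topological Jacobson radical form a zero-convergent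
    -- family in the quotient topology of `R/𝔥`
    (hconv : Filter.Tendsto (fun z => (QuotientAddGroup.mk (f z) : R ⧸ topJacobsonAddSubgroup R))
      Filter.cofinite (nhds 0))
    -- the residue of each `f z` is an idempotent of `R/𝔥`
    (hidem : ∀ z, f z * f z - f z ∈ topJacobson R)
    -- the residue of each `f z` is nonzero
    (hne : ∀ z, f z ∉ topJacobson R)
    -- the residue of each `f z` is a primitive idempotent of `R/𝔥`
    (hprim : ∀ z, ∀ a b : R, a * a - a ∈ topJacobson R → b * b - b ∈ topJacobson R →
      a * b ∈ topJacobson R → b * a ∈ topJacobson R → f z - (a + b) ∈ topJacobson R →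
      a ∈ topJacobson R ∨ b ∈ topJacobson R) :
    ∃ e : Z → R, Filter.Tendsto e Filter.cofinite (nhds 0) ∧
      (∀ z, IsLocalIdempotent (e z)) ∧
      ∀ z, e z - f z ∈ topJacobson R := by
  obtain ⟨W, u, hu0, huloc, huorth, huSum⟩ := hSP
  choose e he hef hrows using fun z => exists_isLocalIdempotent_mk_eq hRL huloc huorth huSum
    (isPrimitiveIdempotent_mk (hidem z) (hne z) (hprim z))
  refine ⟨e, tendsto_cofinite_zero_of_finite_mul_ne_zero hRL hu0 huSum fun v => ?_, he,
    fun z => mk_topJacobsonIdeal_eq_iff.1 (hef z)⟩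
  exact ((huloc v).finite_setOf_mul_notMem_topJacobson hRL hconv).subset
    fun z hz hJ => hz (hrows z v hJ)
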